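/- arXiv:2412.01903 — 2 statements merged into one kernel-verified Lean document; each statement's English description precedes it below -/
import Mathlib

section
/- Let ρ_{AB} be a density matrix on a finite-dimensional tensor product ℋ_A ⊗ ℋ_B with marginals ρ_A, ρ_B, let H_A, H_B be Hermitian operators, and set H_{AB} = H_A ⊗ 1 + 1 ⊗ H_B. Define F(ρ, H) = Tr(ρH) + Tr(ρ log ρ). Then F(ρ_{AB}, H_{AB}) ≥ F(ρ_A, H_A) + F(ρ_B, H_B). -/
open scoped ComplexOrder

/-- Matrix logarithm of a Hermitian matrix, via the functional calculus applied to `Real.log`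
(with the convention `log 0 = 0`). -/
noncomputable def mlog {n : Type*} [Fintype n] [DecidableEq n] (A : Matrix n n ℂ) :
    Matrix n n ℂ :=
  if h : A.IsHermitian then h.cfc Real.log else 0

/-- Kronecker (tensor) product of matrices, indexed by the product type. -/
def kron {a b : Type*} (A : Matrix a a ℂ) (B : Matrix b b ℂ) :
    Matrix (a × b) (a × b) ℂ :=
  Matrix.of fun i j => A i.1 j.1 * B i.2 j.2

/-- Partial trace over the second tensor factor. -/
noncomputable def ptraceB {a b : Type*} [Fintype b] (M : Matrix (a × b) (a × b) ℂ) :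
    Matrix a a ℂ :=
  Matrix.of fun i j => ∑ k : b, M (i, k) (j, k)

/-- Partial trace over the first tensor factor. -/
noncomputable def ptraceA {a b : Type*} [Fintype a] (M : Matrix (a × b) (a × b) ℂ) :
    Matrix b b ℂ :=
  Matrix.of fun i j => ∑ k : a, M (k, i) (k, j)

/-- The free energy `F(ρ,H) = Tr(ρH) + Tr(ρ log ρ)`. -/
noncomputable def freeEnergy {n : Type*} [Fintype n] [DecidableEq n]
    (ρ H : Matrix n n ℂ) : ℝ :=
  ((ρ * H).trace).re + ((ρ * mlog ρ).trace).re

/-! Diagonalize the marginals, `ρ_A = V q V*` and `ρ_B = W r W*`. The diagonal `d` of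
`(V ⊗ W)* ρ (V ⊗ W)` is a probability vector on `a × b` whose marginals are `q` and `r`, so
classical subadditivity of Shannon entropy gives `∑ q log q + ∑ r log r ≤ ∑ d log d`. On the other
hand `d` is the image of the spectrum `p` of `ρ` under the unistochastic matrix `|(V ⊗ W)* U|²`
(`U` an eigenbasis of `ρ`), so convexity of `x log x` gives `∑ d log d ≤ ∑ p log p`. The energy
terms split exactly, since `Tr(ρ (H_A ⊗ 1)) = Tr(ρ_A H_A)`. -/

open Matrix

section DoublyStochastic

variable {𝕜 β n : Type*} [Field 𝕜] [LinearOrder 𝕜] [IsStrictOrderedRing 𝕜] [AddCommGroup β]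
  [PartialOrder β] [IsOrderedAddMonoid β] [Module 𝕜 β] [IsStrictOrderedModule 𝕜 β]
  [Fintype n] [DecidableEq n]

theorem ConvexOn.sum_map_mulVec_le {s : Set 𝕜} {f : 𝕜 → β} (hf : ConvexOn 𝕜 s f)
    {M : Matrix n n 𝕜} (hM : M ∈ doublyStochastic 𝕜 n) {x : n → 𝕜} (hx : ∀ i, x i ∈ s) :
    ∑ i, f ((M *ᵥ x) i) ≤ ∑ i, f (x i) :=
  calc ∑ i, f ((M *ᵥ x) i) ≤ ∑ i, ∑ j, M i j • f (x j) := by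
        refine Finset.sum_le_sum fun i _ => ?_
        exact hf.map_sum_le (fun j _ => nonneg_of_mem_doublyStochastic hM)
          (sum_row_of_mem_doublyStochastic hM i) fun j _ => hx j
    _ = ∑ j, f (x j) := by
        rw [Finset.sum_comm]
        simp only [← Finset.sum_smul, sum_col_of_mem_doublyStochastic hM, one_smul]

end DoublyStochastic

namespace Matrix

variable {n : Type*} [Fintype n] [DecidableEq n]

theorem map_normSq_mem_doublyStochastic {U : Matrix n n ℂ} (hU : U ∈ unitary (Matrix n n ℂ)) :
    U.map Complex.normSq ∈ doublyStochastic ℝ n := by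
  have hdiag : ∀ (A : Matrix n n ℂ) i,
      (A * star A) i i = ((∑ j, Complex.normSq (A i j) : ℝ) : ℂ) := by
    intro A i
    simp [mul_apply, Complex.mul_conj]
  rw [mem_doublyStochastic_iff_sum]
  refine ⟨fun i j => Complex.normSq_nonneg _, fun i => ?_, fun j => ?_⟩
  · have := hdiag U i
    rw [Unitary.mul_star_self_of_mem hU, one_apply_eq] at this
    exact_mod_cast this.symm
  · have := hdiag (star U) j
    rw [star_star, Unitary.star_mul_self_of_mem hU, one_apply_eq] at this
    simp only [star_apply, Complex.star_def, Complex.normSq_conj] at this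
    exact_mod_cast this.symm

variable {A : Matrix n n ℂ}

namespace IsHermitian

variable (hA : A.IsHermitian)
include hA

theorem eq_eigenvectorUnitary_mul_diagonal_mul_star :
    A = (hA.eigenvectorUnitary : Matrix n n ℂ) * diagonal (Complex.ofReal ∘ hA.eigenvalues) *
      star (hA.eigenvectorUnitary : Matrix n n ℂ) := by
  simpa using hA.spectral_theorem

theorem star_eigenvectorUnitary_mul_mul_eigenvectorUnitary :
    star (hA.eigenvectorUnitary : Matrix n n ℂ) * A * hA.eigenvectorUnitary =
      diagonal (Complex.ofReal ∘ hA.eigenvalues) := by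
  simpa using hA.conjStarAlgAut_star_eigenvectorUnitary

theorem trace_mul_cfc (f : ℝ → ℝ) :
    (A * hA.cfc f).trace = ∑ i, ((hA.eigenvalues i * f (hA.eigenvalues i) : ℝ) : ℂ) := by
  set U : Matrix n n ℂ := ↑hA.eigenvectorUnitary
  have hU : star U * U = 1 := Unitary.coe_star_mul_self _
  calc (A * hA.cfc f).trace
      = (U * (diagonal (Complex.ofReal ∘ hA.eigenvalues) * (star U * U) *
          diagonal (Complex.ofReal ∘ f ∘ hA.eigenvalues)) * star U).trace := by
        rw [IsHermitian.cfc, Unitary.conjStarAlgAut_apply]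
        conv_rhs => simp only [← mul_assoc]
        rw [← hA.eq_eigenvectorUnitary_mul_diagonal_mul_star]
        simp only [U, mul_assoc]
        rfl
    _ = ∑ i, ((hA.eigenvalues i * f (hA.eigenvalues i) : ℝ) : ℂ) := by
        rw [trace_mul_cycle, ← mul_assoc, hU, one_mul, mul_one, diagonal_mul_diagonal,
          trace_diagonal]
        simp

theorem re_diag_star_mul_mul (N : Matrix n n ℂ) (s : n) :
    ((star N * A * N) s s).re =
      ((star N * hA.eigenvectorUnitary).map Complex.normSq *ᵥ hA.eigenvalues) s := by
  set M := star N * (hA.eigenvectorUnitary : Matrix n n ℂ)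
  have hconj : star N * A * N = M * diagonal (Complex.ofReal ∘ hA.eigenvalues) * star M := by
    conv_lhs => rw [hA.eq_eigenvectorUnitary_mul_diagonal_mul_star]
    simp only [M, star_mul, star_star, mul_assoc]
  rw [hconj, mul_apply, Complex.re_sum]
  simp only [mul_diagonal, star_apply, mulVec, dotProduct, map_apply]
  refine Finset.sum_congr rfl fun i _ => ?_
  rw [mul_right_comm, Complex.star_def, Complex.mul_conj, Function.comp_apply,
    ← Complex.ofReal_mul, Complex.ofReal_re]

end IsHermitian

theorem PosSemidef.sum_mul_log_re_diag_star_mul_mul_le (hA : A.PosSemidef) {N : Matrix n n ℂ}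
    (hN : N ∈ unitary (Matrix n n ℂ)) :
    ∑ s, ((star N * A * N) s s).re * Real.log ((star N * A * N) s s).re ≤
      ∑ i, hA.1.eigenvalues i * Real.log (hA.1.eigenvalues i) := by
  simp only [hA.1.re_diag_star_mul_mul]
  exact Real.convexOn_mul_log.sum_map_mulVec_le
    (map_normSq_mem_doublyStochastic
      (mul_mem (Unitary.star_mem hN) hA.1.eigenvectorUnitary.2))
    fun i => hA.eigenvalues_nonneg i

theorem IsHermitian.re_trace_mul_mlog (hA : A.IsHermitian) :
    (A * mlog A).trace.re = ∑ i, hA.eigenvalues i * Real.log (hA.eigenvalues i) := by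
  rw [mlog, dif_pos hA, hA.trace_mul_cfc, ← Complex.ofReal_sum, Complex.ofReal_re]

end Matrix

namespace Real

theorem mul_log_add_mul_log_add_sub_mul_le_mul_log {d q r : ℝ} (hd : 0 ≤ d) (hdq : d ≤ q)
    (hdr : d ≤ r) : d * log q + d * log r + (d - q * r) ≤ d * log d := by
  rcases hd.eq_or_lt with rfl | hd
  · simpa using mul_nonneg hdq hdr
  have hqr : 0 < q * r := mul_pos (hd.trans_le hdq) (hd.trans_le hdr)
  have hlog := log_le_sub_one_of_pos (div_pos hqr hd)
  rw [log_div hqr.ne' hd.ne', log_mul (hd.trans_le hdq).ne' (hd.trans_le hdr).ne'] at hlog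
  have h := mul_le_mul_of_nonneg_left hlog hd.le
  have hrhs : d * (q * r / d - 1) = q * r - d := by field_simp
  linarith

theorem sum_mul_log_marginals_le {a b : Type*} [Fintype a] [Fintype b] {d : a × b → ℝ}
    (hd : ∀ s, 0 ≤ d s) (hd1 : ∑ s, d s = 1) :
    ∑ m, (∑ n, d (m, n)) * log (∑ n, d (m, n)) + ∑ n, (∑ m, d (m, n)) * log (∑ m, d (m, n)) ≤
      ∑ s, d s * log (d s) := by
  set q : a → ℝ := fun m => ∑ n, d (m, n)
  set r : b → ℝ := fun n => ∑ m, d (m, n)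
  have hq1 : ∑ m, q m = 1 := by rw [← hd1, Fintype.sum_prod_type]
  have hr1 : ∑ n, r n = 1 := by rw [← hd1, Fintype.sum_prod_type, Finset.sum_comm]
  have hdq : ∀ s, d s ≤ q s.1 := fun s =>
    Finset.single_le_sum (f := fun n => d (s.1, n)) (fun n _ => hd _) (Finset.mem_univ s.2)
  have hdr : ∀ s, d s ≤ r s.2 := fun s =>
    Finset.single_le_sum (f := fun m => d (m, s.2)) (fun m _ => hd _) (Finset.mem_univ s.1)
  have hpointwise := Finset.sum_le_sum fun s (_ : s ∈ Finset.univ) =>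
    mul_log_add_mul_log_add_sub_mul_le_mul_log (hd s) (hdq s) (hdr s)
  have hfst : ∑ s : a × b, d s * log (q s.1) = ∑ m, q m * log (q m) := by
    simp only [Fintype.sum_prod_type, q, Finset.sum_mul]
  have hsnd : ∑ s : a × b, d s * log (r s.2) = ∑ n, r n * log (r n) := by
    simp only [Fintype.sum_prod_type, r, Finset.sum_mul]
    exact Finset.sum_comm
  have hbalance : ∑ s : a × b, (d s - q s.1 * r s.2) = 0 := by
    rw [Finset.sum_sub_distrib, hd1, Fintype.sum_prod_type, ← Finset.sum_mul_sum, hq1, hr1]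
    norm_num
  rw [Finset.sum_add_distrib, Finset.sum_add_distrib, hfst, hsnd, hbalance] at hpointwise
  linarith

end Real

section PartialTrace

open scoped Kronecker

variable {a b : Type*}

theorem kron_eq_kronecker (A : Matrix a a ℂ) (B : Matrix b b ℂ) : kron A B = A ⊗ₖ B := rfl

theorem ptraceB_isHermitian [Fintype b] {M : Matrix (a × b) (a × b) ℂ} (hM : M.IsHermitian) :
    (ptraceB M).IsHermitian := by
  ext i j
  simp only [conjTranspose_apply, ptraceB, of_apply, star_sum]
  exact Finset.sum_congr rfl fun k _ => hM.apply _ _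

theorem ptraceA_isHermitian [Fintype a] {M : Matrix (a × b) (a × b) ℂ} (hM : M.IsHermitian) :
    (ptraceA M).IsHermitian := by
  ext i j
  simp only [conjTranspose_apply, ptraceA, of_apply, star_sum]
  exact Finset.sum_congr rfl fun k _ => hM.apply _ _

variable [Fintype a] [Fintype b]

theorem trace_mul_kron_one [DecidableEq b] (M : Matrix (a × b) (a × b) ℂ) (X : Matrix a a ℂ) :
    (M * kron X 1).trace = (ptraceB M * X).trace := by
  simp only [trace, diag, mul_apply, ptraceB, kron, of_apply, Fintype.sum_prod_type, one_apply,
    Finset.sum_mul, mul_ite, mul_one, mul_zero, Finset.sum_ite_eq', Finset.mem_univ, if_true]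
  exact Finset.sum_congr rfl fun i _ => Finset.sum_comm

theorem trace_mul_one_kron [DecidableEq a] (M : Matrix (a × b) (a × b) ℂ) (Y : Matrix b b ℂ) :
    (M * kron 1 Y).trace = (ptraceA M * Y).trace := by
  simp only [trace, diag, mul_apply, ptraceA, kron, of_apply, Fintype.sum_prod_type, one_apply,
    Finset.sum_mul, ite_mul, one_mul, zero_mul, mul_ite, mul_zero, Finset.sum_ite_irrel,
    Finset.sum_const_zero, Finset.sum_ite_eq', Finset.mem_univ, if_true]
  rw [Finset.sum_comm]
  exact Finset.sum_congr rfl fun i _ => Finset.sum_comm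

theorem ptraceB_conj_kron [DecidableEq b] (V : Matrix a a ℂ) {W : Matrix b b ℂ}
    (hW : W ∈ unitary (Matrix b b ℂ)) (M : Matrix (a × b) (a × b) ℂ) :
    ptraceB (star (kron V W) * M * kron V W) = star V * ptraceB M * V := by
  rw [ext_iff_trace_mul_right]
  intro X
  have hconj : kron V W * kron X 1 * star (kron V W) = kron (V * X * star V) 1 := by
    simp only [kron_eq_kronecker]
    rw [star_eq_conjTranspose, conjTranspose_kronecker, ← mul_kronecker_mul, ← mul_kronecker_mul,
      mul_one, ← star_eq_conjTranspose, ← star_eq_conjTranspose, Unitary.mul_star_self_of_mem hW]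
  calc (ptraceB (star (kron V W) * M * kron V W) * X).trace
      = (M * (kron V W * kron X 1 * star (kron V W))).trace := by
        rw [← trace_mul_kron_one]
        simp only [mul_assoc]
        rw [trace_mul_comm (star (kron V W))]
        simp only [mul_assoc]
    _ = (star V * ptraceB M * V * X).trace := by
        rw [hconj, trace_mul_kron_one]
        simp only [mul_assoc]
        rw [trace_mul_comm (star V)]
        simp only [mul_assoc]

theorem ptraceA_conj_kron [DecidableEq a] {V : Matrix a a ℂ} (hV : V ∈ unitary (Matrix a a ℂ))
    (W : Matrix b b ℂ) (M : Matrix (a × b) (a × b) ℂ) :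
    ptraceA (star (kron V W) * M * kron V W) = star W * ptraceA M * W := by
  rw [ext_iff_trace_mul_right]
  intro Y
  have hconj : kron V W * kron 1 Y * star (kron V W) = kron 1 (W * Y * star W) := by
    simp only [kron_eq_kronecker]
    rw [star_eq_conjTranspose, conjTranspose_kronecker, ← mul_kronecker_mul, ← mul_kronecker_mul,
      mul_one, ← star_eq_conjTranspose, ← star_eq_conjTranspose, Unitary.mul_star_self_of_mem hV]
  calc (ptraceA (star (kron V W) * M * kron V W) * Y).trace
      = (M * (kron V W * kron 1 Y * star (kron V W))).trace := by
        rw [← trace_mul_one_kron]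
        simp only [mul_assoc]
        rw [trace_mul_comm (star (kron V W))]
        simp only [mul_assoc]
    _ = (star W * ptraceA M * W * Y).trace := by
        rw [hconj, trace_mul_one_kron]
        simp only [mul_assoc]
        rw [trace_mul_comm (star W)]
        simp only [mul_assoc]

end PartialTrace

theorem free_energy_superadditive_general {a b : Type*} [Fintype a] [DecidableEq a]
    [Fintype b] [DecidableEq b]
    (ρ : Matrix (a × b) (a × b) ℂ) (hρ : ρ.PosSemidef) (hρ1 : ρ.trace = 1)
    (HA : Matrix a a ℂ) (HB : Matrix b b ℂ) :
    freeEnergy (ptraceB ρ) HA + freeEnergy (ptraceA ρ) HB ≤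
      freeEnergy ρ (kron HA (1 : Matrix b b ℂ) + kron (1 : Matrix a a ℂ) HB) := by
  have hA := ptraceB_isHermitian hρ.1
  have hB := ptraceA_isHermitian hρ.1
  set V : Matrix a a ℂ := ↑hA.eigenvectorUnitary
  set W : Matrix b b ℂ := ↑hB.eigenvectorUnitary
  have hV : V ∈ unitary _ := hA.eigenvectorUnitary.2
  have hW : W ∈ unitary _ := hB.eigenvectorUnitary.2
  have hK : kron V W ∈ unitary _ := kronecker_mem_unitary hV hW
  set d : a × b → ℝ := fun s => ((star (kron V W) * ρ * kron V W) s s).re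
  have hd_nonneg : ∀ s, 0 ≤ d s := fun s => by
    have hpsd := hρ.conjTranspose_mul_mul_same (kron V W)
    rw [← star_eq_conjTranspose] at hpsd
    exact (Complex.nonneg_iff.mp hpsd.diag_nonneg).1
  have hd_sum : ∑ s, d s = 1 := by
    have htrace : (star (kron V W) * ρ * kron V W).trace = 1 := by
      rw [trace_mul_cycle, Unitary.mul_star_self_of_mem hK, one_mul, hρ1]
    simpa [d, trace, Complex.re_sum] using congrArg Complex.re htrace
  have hfst : ∀ m, ∑ n, d (m, n) = hA.eigenvalues m := fun m => by
    simpa [d, ptraceB, Complex.re_sum] using congrArg (fun X => (X m m).re)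
      ((ptraceB_conj_kron V hW ρ).trans hA.star_eigenvectorUnitary_mul_mul_eigenvectorUnitary)
  have hsnd : ∀ n, ∑ m, d (m, n) = hB.eigenvalues n := fun n => by
    simpa [d, ptraceA, Complex.re_sum] using congrArg (fun X => (X n n).re)
      ((ptraceA_conj_kron hV W ρ).trans hB.star_eigenvectorUnitary_mul_mul_eigenvectorUnitary)
  have hsubadd := Real.sum_mul_log_marginals_le hd_nonneg hd_sum
  simp only [hfst, hsnd] at hsubadd
  have hschur := hρ.sum_mul_log_re_diag_star_mul_mul_le hK
  simp only [freeEnergy, mul_add, trace_add, Complex.add_re, trace_mul_kron_one,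
    trace_mul_one_kron, hρ.1.re_trace_mul_mlog, hA.re_trace_mul_mlog, hB.re_trace_mul_mlog]
  linarith

/-- Superadditivity of free energy: for a bipartite density matrix `ρ_{AB}` with marginals
`ρ_A, ρ_B`, Hermitian `H_A, H_B` and `H_{AB} = H_A ⊗ 1 + 1 ⊗ H_B`, one has
`F(ρ_{AB}, H_{AB}) ≥ F(ρ_A, H_A) + F(ρ_B, H_B)`. -/
theorem free_energy_superadditive {a b : Type*} [Fintype a] [DecidableEq a]
    [Fintype b] [DecidableEq b]
    (ρ : Matrix (a × b) (a × b) ℂ) (hρ : ρ.PosSemidef) (hρ1 : ρ.trace = 1)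
    (HA : Matrix a a ℂ) (HB : Matrix b b ℂ)
    (hHA : HA.IsHermitian) (hHB : HB.IsHermitian) :
    freeEnergy (ptraceB ρ) HA + freeEnergy (ptraceA ρ) HB ≤
      freeEnergy ρ (kron HA (1 : Matrix b b ℂ) + kron (1 : Matrix a a ℂ) HB) :=
  free_energy_superadditive_general ρ hρ hρ1 HA HB
end

section
/- Let ℋ_A, ℋ_B be finite-dimensional Hilbert spaces and let ρ, ρ' be density matrices on ℋ_A ⊗ ℋ_B with ρ' positive definite. Then the relative entropies of the marginals satisfy monotonicity under partial trace: Tr(ρ_A(log ρ_A − log ρ'_A)) ≤ Tr(ρ(log ρ − log ρ')), where ρ_A = Tr_B ρ and ρ'_A = Tr_B ρ'. Consequently S(ρ_A) + Tr(ρ_A log ρ'_A) ≥ S(ρ) + Tr(ρ log ρ'), where S denotes von Neumann entropy. -/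
open scoped ComplexOrder

/-- Von Neumann entropy `S(ρ) = -Tr(ρ log ρ)`. -/
noncomputable def vnEntropy {n : Type*} [Fintype n] [DecidableEq n]
    (ρ : Matrix n n ℂ) : ℝ :=
  -((ρ * mlog ρ).trace).re

/-!
Write `ρ = ∑ pᵢ |uᵢ⟩⟨uᵢ|`, `σ = ∑ qⱼ |vⱼ⟩⟨vⱼ|` and `cᵢⱼ = |⟨uᵢ, vⱼ⟩|²`. Then
`Tr ρ (log ρ - log σ) = ∑ cᵢⱼ pᵢ (log pᵢ - log qⱼ)`, and this classical sum is an integral over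
`t ∈ (0, ∞)` of the resolvent sums `R(t) = ∑ cᵢⱼ qⱼ² / (pᵢ + t qⱼ)`: the primitive
`Φ(t) = ∑ cᵢⱼ pᵢ (log (1 + t) - log (pᵢ + t qⱼ))` has `Φ' = Tr ρ / (1 + t) - Tr σ + t R(t)` and runs
from `-∑ pᵢ log pᵢ` at `t = 0` to `-∑ cᵢⱼ pᵢ log qⱼ` at `t = ∞`. As the partial trace preserves
traces, it suffices to compare resolvent sums for each `t > 0`.

For that, `R(t)` is the maximum over all matrices `Y` of the concave quadratic form
`Re (2 Tr (Y* σ) - Tr (Y* ρ Y) - t Tr (Y* Y σ))`: in the coordinates `Y = U X V*` given by the two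
eigenbases it splits into one completed square per entry of `X`. Evaluated at `Y ⊗ 1`, the form of
`(ρ, σ)` is the form of `(Tr_B ρ, Tr_B σ)` at `Y`, so the maximum can only decrease under `Tr_B`.
-/

open scoped Kronecker
open Filter Topology Matrix

section IntegralRepresentation

variable {ι : Type*} [Fintype ι]

noncomputable def weightedRelEntropy (c p q : ι → ℝ) : ℝ :=
  ∑ i, c i * (p i * (Real.log (p i) - Real.log (q i)))

noncomputable def relEntropyPrimitive (c p q : ι → ℝ) (t : ℝ) : ℝ :=
  ∑ i, c i * (p i * (Real.log (1 + t) - Real.log (p i + t * q i)))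

noncomputable def resolventSum (c p q : ι → ℝ) (t : ℝ) : ℝ :=
  ∑ i, c i * (q i ^ 2 / (p i + t * q i))

variable {c p q : ι → ℝ}

theorem hasDerivAt_relEntropyPrimitive (hp : ∀ i, 0 ≤ p i) (hq : ∀ i, 0 < q i) {t : ℝ}
    (ht : 0 < t) :
    HasDerivAt (relEntropyPrimitive c p q)
      ((∑ i, c i * p i) / (1 + t) - ∑ i, c i * q i + t * resolventSum c p q t) t := by
  have hden : ∀ i, 0 < p i + t * q i := fun i => by positivity [hp i, hq i]
  have hterm : ∀ i, HasDerivAt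
      (fun s => c i * (p i * (Real.log (1 + s) - Real.log (p i + s * q i))))
      (c i * (p i * (1 / (1 + t) - q i / (p i + t * q i)))) t := fun i => by
    have h1 : HasDerivAt (fun s : ℝ => Real.log (1 + s)) (1 / (1 + t)) t := by
      simpa using ((hasDerivAt_id t).const_add 1).log (by positivity)
    have h2 : HasDerivAt (fun s : ℝ => Real.log (p i + s * q i)) (q i / (p i + t * q i)) t := by
      simpa using (((hasDerivAt_id t).mul_const (q i)).const_add (p i)).log (hden i).ne'
    exact ((h1.sub h2).const_mul (p i)).const_mul (c i)
  refine (HasDerivAt.fun_sum (u := Finset.univ) fun i _ => hterm i).congr_deriv ?_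
  simp only [resolventSum, Finset.sum_div, Finset.mul_sum, ← Finset.sum_sub_distrib,
    ← Finset.sum_add_distrib]
  refine Finset.sum_congr rfl fun i _ => ?_
  field_simp [(hden i).ne']
  ring

theorem continuousOn_relEntropyPrimitive (hp : ∀ i, 0 ≤ p i) (hq : ∀ i, 0 < q i) :
    ContinuousOn (relEntropyPrimitive c p q) (Set.Ici 0) := by
  refine continuousOn_finsetSum _ fun i _ => ?_
  rcases (hp i).eq_or_lt with hpi | hpi
  · simp only [← hpi, zero_mul, mul_zero]
    exact continuousOn_const
  · refine continuousOn_const.mul (continuousOn_const.mul (ContinuousOn.sub ?_ ?_)) <;>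
      refine ContinuousOn.log (by fun_prop) fun s (hs : 0 ≤ s) => ?_
    · positivity
    · have := hq i
      positivity

theorem tendsto_one_add_div_add_mul_atTop (p : ℝ) {q : ℝ} (hq : 0 < q) :
    Tendsto (fun t => (1 + t) / (p + t * q)) atTop (𝓝 q⁻¹) := by
  have hden : Tendsto (fun t => p + t * q) atTop atTop :=
    tendsto_atTop_add_const_left _ _ (tendsto_id.atTop_mul_const hq)
  have hlim := (tendsto_const_nhds (x := q⁻¹)).add
    ((tendsto_const_nhds (x := (q - p) / q)).div_atTop hden)
  rw [add_zero] at hlim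
  refine hlim.congr' ?_
  filter_upwards [hden.eventually_gt_atTop 0] with t ht
  rw [eq_div_iff ht.ne', add_mul, div_mul_cancel₀ _ ht.ne']
  field_simp
  ring

theorem tendsto_relEntropyPrimitive_atTop (hp : ∀ i, 0 ≤ p i) (hq : ∀ i, 0 < q i) :
    Tendsto (relEntropyPrimitive c p q) atTop
      (𝓝 (relEntropyPrimitive c p q 0 + weightedRelEntropy c p q)) := by
  have hlim : ∀ i, Tendsto (fun t => Real.log (1 + t) - Real.log (p i + t * q i)) atTop
      (𝓝 (Real.log (q i)⁻¹)) := fun i => by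
    refine ((tendsto_one_add_div_add_mul_atTop (p i) (hq i)).log
      (inv_ne_zero (hq i).ne')).congr' ?_
    filter_upwards [eventually_gt_atTop 0] with t ht
    have := hq i
    exact Real.log_div (by positivity) (by positivity [hp i])
  have hsum : relEntropyPrimitive c p q 0 + weightedRelEntropy c p q
      = ∑ i, c i * (p i * Real.log (q i)⁻¹) := by
    simp only [relEntropyPrimitive, weightedRelEntropy, ← Finset.sum_add_distrib, Real.log_inv]
    refine Finset.sum_congr rfl fun i _ => ?_
    simp only [add_zero, Real.log_one, zero_mul, zero_sub, mul_neg]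
    ring
  rw [hsum]
  exact tendsto_finsetSum Finset.univ fun i _ => ((hlim i).const_mul (p i)).const_mul (c i)

theorem weightedRelEntropy_le_of_resolventSum_le {κ : Type*} [Fintype κ] {c' p' q' : κ → ℝ}
    (hp : ∀ i, 0 ≤ p i) (hq : ∀ i, 0 < q i) (hp' : ∀ k, 0 ≤ p' k) (hq' : ∀ k, 0 < q' k)
    (hmass_p : ∑ k, c' k * p' k = ∑ i, c i * p i) (hmass_q : ∑ k, c' k * q' k = ∑ i, c i * q i)
    (hR : ∀ t, 0 < t → resolventSum c' p' q' t ≤ resolventSum c p q t) :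
    weightedRelEntropy c' p' q' ≤ weightedRelEntropy c p q := by
  set D := relEntropyPrimitive c p q - relEntropyPrimitive c' p' q'
  have hD : MonotoneOn D (Set.Ici 0) := by
    refine monotoneOn_of_hasDerivWithinAt_nonneg
      (f' := fun t => t * (resolventSum c p q t - resolventSum c' p' q' t)) (convex_Ici 0)
      ((continuousOn_relEntropyPrimitive hp hq).sub (continuousOn_relEntropyPrimitive hp' hq'))
      (fun t ht => ?_) fun t ht => ?_
    · rw [interior_Ici] at ht
      refine ((hasDerivAt_relEntropyPrimitive hp hq ht).sub
        (hasDerivAt_relEntropyPrimitive hp' hq' ht)).hasDerivWithinAt.congr_deriv ?_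
      rw [hmass_p, hmass_q]
      ring
    · rw [interior_Ici] at ht
      exact mul_nonneg ht.le (sub_nonneg.2 (hR t ht))
  have hlim := (tendsto_relEntropyPrimitive_atTop (c := c) hp hq).sub
    (tendsto_relEntropyPrimitive_atTop (c := c') hp' hq')
  have := ge_of_tendsto hlim (eventually_atTop.2 ⟨0, fun t ht => hD Set.self_mem_Ici ht ht⟩)
  simp only [D, Pi.sub_apply] at this
  linarith

end IntegralRepresentation

section PartialTrace

variable {a b : Type*} [Fintype b]

theorem ptraceB_eq_sum_submatrix (M : Matrix (a × b) (a × b) ℂ) :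
    ptraceB M = ∑ k, M.submatrix (·, k) (·, k) := by
  ext i j
  simp [ptraceB, Matrix.sum_apply]

theorem ptraceB_of_isEmpty [IsEmpty b] (M : Matrix (a × b) (a × b) ℂ) : ptraceB M = 0 := by
  simp [ptraceB_eq_sum_submatrix]

theorem Matrix.PosSemidef.ptraceB {M : Matrix (a × b) (a × b) ℂ} (hM : M.PosSemidef) :
    (ptraceB M).PosSemidef := by
  rw [ptraceB_eq_sum_submatrix]
  exact posSemidef_sum _ fun k _ => hM.submatrix _

theorem Matrix.PosDef.ptraceB [Nonempty b] {M : Matrix (a × b) (a × b) ℂ} (hM : M.PosDef) :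
    (ptraceB M).PosDef := by
  rw [ptraceB_eq_sum_submatrix]
  exact posDef_sum Finset.univ_nonempty fun k _ => hM.submatrix (Prod.mk_left_injective k)

variable [Fintype a]

theorem trace_ptraceB (M : Matrix (a × b) (a × b) ℂ) : (ptraceB M).trace = M.trace := by
  simp [trace, ptraceB, Fintype.sum_prod_type]

theorem trace_kronecker_one_mul [DecidableEq b] (M : Matrix a a ℂ)
    (N : Matrix (a × b) (a × b) ℂ) :
    (M ⊗ₖ (1 : Matrix b b ℂ) * N).trace = (M * ptraceB N).trace := by
  simp only [trace, diag, mul_apply, Fintype.sum_prod_type, kroneckerMap_apply, one_apply,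
    mul_ite, mul_one, mul_zero, ite_mul, zero_mul, Finset.sum_ite_eq, Finset.mem_univ, if_true,
    ptraceB, of_apply, Finset.mul_sum]
  exact Finset.sum_congr rfl fun i _ => Finset.sum_comm

end PartialTrace

section Spectral

variable {n : Type*} [Fintype n] [DecidableEq n]

theorem trace_diagonal_mul_mul_diagonal_mul_star (K : Matrix n n ℂ) (d e : n → ℝ) :
    (diagonal (RCLike.ofReal ∘ d) * K * diagonal (RCLike.ofReal ∘ e) * star K).trace
      = ((∑ i, ∑ j, Complex.normSq (K i j) * (d i * e j) : ℝ) : ℂ) := by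
  have hentry : ∀ i j,
      (diagonal (RCLike.ofReal ∘ d) * K * diagonal (RCLike.ofReal ∘ e) : Matrix n n ℂ) i j
        = d i * K i j * e j := fun i j => by simp [diagonal_mul, mul_diagonal]
  generalize diagonal (RCLike.ofReal ∘ d) * K * diagonal (RCLike.ofReal ∘ e) = X at hentry
  simp only [trace, diag, mul_apply, hentry, star_apply]
  push_cast
  refine Finset.sum_congr rfl fun i _ => Finset.sum_congr rfl fun j _ => ?_
  rw [Complex.normSq_eq_conj_mul_self]
  simp only [RCLike.star_def]
  ring

theorem trace_conj_diagonal_mul_conj_diagonal (U V : Matrix n n ℂ) (d e : n → ℝ) :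
    (U * diagonal (RCLike.ofReal ∘ d) * star U * (V * diagonal (RCLike.ofReal ∘ e) * star V)).trace
      = ((∑ i, ∑ j, Complex.normSq ((star U * V) i j) * (d i * e j) : ℝ) : ℂ) := by
  rw [← trace_diagonal_mul_mul_diagonal_mul_star, star_mul, star_star, Matrix.mul_assoc U,
    Matrix.mul_assoc U, trace_mul_comm U]
  simp only [Matrix.mul_assoc]

variable {A B : Matrix n n ℂ}

noncomputable def transitionMatrix (hA : A.IsHermitian) (hB : B.IsHermitian) : Matrix n n ℂ :=
  ((star hA.eigenvectorUnitary * hB.eigenvectorUnitary : unitary (Matrix n n ℂ)) : Matrix n n ℂ)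

noncomputable def overlap (hA : A.IsHermitian) (hB : B.IsHermitian) (ij : n × n) : ℝ :=
  Complex.normSq (transitionMatrix hA hB ij.1 ij.2)

theorem re_trace_mul_cfc (hA : A.IsHermitian) (hB : B.IsHermitian) (f : ℝ → ℝ) :
    (A * hB.cfc f).trace.re
      = ∑ ij, overlap hA hB ij * (hA.eigenvalues ij.1 * f (hB.eigenvalues ij.2)) := by
  conv_lhs => rw [hA.spectral_theorem]
  rw [IsHermitian.cfc, Unitary.conjStarAlgAut_apply, Unitary.conjStarAlgAut_apply,
    trace_conj_diagonal_mul_conj_diagonal, Complex.ofReal_re, Fintype.sum_prod_type]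
  rfl

theorem sum_normSq_apply_right (K : unitary (Matrix n n ℂ)) (i : n) :
    ∑ j, Complex.normSq ((K : Matrix n n ℂ) i j) = 1 := by
  have h := congr_fun₂ (Unitary.coe_mul_star_self K) i i
  simp only [Unitary.coe_star, mul_apply, one_apply_eq, star_apply, RCLike.star_def,
    Complex.mul_conj] at h
  exact_mod_cast h

theorem sum_normSq_apply_left (K : unitary (Matrix n n ℂ)) (j : n) :
    ∑ i, Complex.normSq ((K : Matrix n n ℂ) i j) = 1 := by
  have h := congr_fun₂ (Unitary.coe_star_mul_self K) j j
  simp only [mul_apply, one_apply_eq, star_apply, RCLike.star_def,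
    ← Complex.normSq_eq_conj_mul_self] at h
  exact_mod_cast h

theorem sum_overlap_mul_fst (hA : A.IsHermitian) (hB : B.IsHermitian) (g : n → ℝ) :
    ∑ ij, overlap hA hB ij * g ij.1 = ∑ i, g i := by
  simp only [Fintype.sum_prod_type, overlap, transitionMatrix, ← Finset.sum_mul,
    sum_normSq_apply_right, one_mul]

theorem sum_overlap_mul_snd (hA : A.IsHermitian) (hB : B.IsHermitian) (g : n → ℝ) :
    ∑ ij, overlap hA hB ij * g ij.2 = ∑ j, g j := by
  simp only [Fintype.sum_prod_type_right, overlap, transitionMatrix, ← Finset.sum_mul,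
    sum_normSq_apply_left, one_mul]

theorem sum_overlap_self (hA : A.IsHermitian) (g : n × n → ℝ) :
    ∑ ij, overlap hA hA ij * g ij = ∑ i, g (i, i) := by
  simp [overlap, transitionMatrix, Fintype.sum_prod_type, Unitary.star_mul_self, one_apply]

theorem sum_overlap_mul_eigenvalues_fst (hA : A.IsHermitian) (hB : B.IsHermitian) :
    ∑ ij, overlap hA hB ij * hA.eigenvalues ij.1 = A.trace.re := by
  rw [sum_overlap_mul_fst, hA.trace_eq_sum_eigenvalues]
  simp

theorem sum_overlap_mul_eigenvalues_snd (hA : A.IsHermitian) (hB : B.IsHermitian) :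
    ∑ ij, overlap hA hB ij * hB.eigenvalues ij.2 = B.trace.re := by
  rw [sum_overlap_mul_snd, hB.trace_eq_sum_eigenvalues]
  simp

noncomputable def relEntropy (A B : Matrix n n ℂ) : ℝ :=
  (A * (mlog A - mlog B)).trace.re

theorem relEntropy_eq_weightedRelEntropy (hA : A.IsHermitian) (hB : B.IsHermitian) :
    relEntropy A B = weightedRelEntropy (overlap hA hB) (fun ij => hA.eigenvalues ij.1)
      (fun ij => hB.eigenvalues ij.2) := by
  have hself := re_trace_mul_cfc hA hA Real.log
  rw [sum_overlap_self, ← sum_overlap_mul_fst hA hB] at hself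
  simp only [relEntropy, weightedRelEntropy, mlog, dif_pos hA, dif_pos hB,
    trace_sub, Complex.sub_re, hself, re_trace_mul_cfc hA hB, mul_sub, Finset.sum_sub_distrib]

end Spectral

section ResolventForm

variable {n : Type*} [Fintype n]

noncomputable def resolventForm (ρ σ : Matrix n n ℂ) (t : ℝ) (Y : Matrix n n ℂ) : ℝ :=
  (2 * (star Y * σ).trace - (star Y * ρ * Y).trace - t * (star Y * Y * σ).trace).re

theorem trace_star_mul (X M : Matrix n n ℂ) :
    (star X * M).trace = ∑ i, ∑ j, star (X i j) * M i j := by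
  simp only [trace, diag, mul_apply, star_apply]
  exact Finset.sum_comm

variable [DecidableEq n]

theorem resolventForm_conj {U V : Matrix n n ℂ} (hU : U ∈ unitaryGroup n ℂ)
    (hV : V ∈ unitaryGroup n ℂ) (p q : n → ℝ) (t : ℝ) (X : Matrix n n ℂ) :
    resolventForm (U * diagonal (RCLike.ofReal ∘ p) * star U)
        (V * diagonal (RCLike.ofReal ∘ q) * star V) t (U * X * star V)
      = ∑ i, ∑ j, (2 * q j * (star (X i j) * (star U * V) i j).re
          - (p i + t * q j) * Complex.normSq (X i j)) := by
  have hUU : ∀ M, star U * (U * M) = M := fun M => by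
    rw [← Matrix.mul_assoc, Unitary.star_mul_self_of_mem hU, Matrix.one_mul]
  have hVV := Unitary.star_mul_self_of_mem hV
  have hVV' : ∀ M, star V * (V * M) = M := fun M => by
    rw [← Matrix.mul_assoc, hVV, Matrix.one_mul]
  have hcycle : ∀ M : Matrix n n ℂ, (V * M).trace = (M * V).trace := fun M => trace_mul_comm _ _
  simp only [resolventForm, star_mul, star_star, Matrix.mul_assoc, hUU, hVV', hcycle, hVV,
    Matrix.mul_one, trace_star_mul]
  rw [← Matrix.mul_assoc (star U) V]
  simp only [mul_diagonal, diagonal_mul, Finset.mul_sum, ← Finset.sum_sub_distrib, Complex.re_sum]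
  refine Finset.sum_congr rfl fun i _ => Finset.sum_congr rfl fun j _ => ?_
  simp only [RCLike.star_def, Complex.coe_algebraMap, Function.comp_apply, Complex.sub_re,
    Complex.mul_re, Complex.re_ofNat, Complex.conj_re, Complex.ofReal_re, Complex.ofReal_im,
    mul_zero, sub_zero, Complex.conj_im, Complex.mul_im, zero_add, neg_mul, sub_neg_eq_add,
    Complex.im_ofNat, zero_mul, add_zero, Complex.normSq_apply]
  ring

theorem two_mul_re_sub_mul_normSq {a : ℝ} (ha : a ≠ 0) (q : ℝ) (x k : ℂ) :
    2 * q * (star x * k).re - a * Complex.normSq x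
      = Complex.normSq k * (q ^ 2 / a) - a * Complex.normSq (x - k * ((q / a : ℝ) : ℂ)) := by
  simp only [Complex.normSq_apply, Complex.mul_re, Complex.sub_re, Complex.sub_im,
    Complex.mul_im, Complex.star_def, Complex.conj_re, Complex.conj_im, Complex.ofReal_re,
    Complex.ofReal_im]
  field_simp
  ring

theorem isGreatest_resolventForm_conj {U V : Matrix n n ℂ} (hU : U ∈ unitaryGroup n ℂ)
    (hV : V ∈ unitaryGroup n ℂ) {p q : n → ℝ} (hp : ∀ i, 0 ≤ p i) (hq : ∀ j, 0 < q j) {t : ℝ}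
    (ht : 0 < t) :
    IsGreatest (Set.range (resolventForm (U * diagonal (RCLike.ofReal ∘ p) * star U)
        (V * diagonal (RCLike.ofReal ∘ q) * star V) t))
      (∑ i, ∑ j, Complex.normSq ((star U * V) i j) * (q j ^ 2 / (p i + t * q j))) := by
  have hpos : ∀ i j, 0 < p i + t * q j := fun i j =>
    add_pos_of_nonneg_of_pos (hp i) (mul_pos ht (hq j))
  have hform : ∀ X, resolventForm (U * diagonal (RCLike.ofReal ∘ p) * star U)
        (V * diagonal (RCLike.ofReal ∘ q) * star V) t (U * X * star V)
      = ∑ i, ∑ j, (Complex.normSq ((star U * V) i j) * (q j ^ 2 / (p i + t * q j))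
          - (p i + t * q j) * Complex.normSq
            (X i j - (star U * V) i j * ((q j / (p i + t * q j) : ℝ) : ℂ))) := fun X => by
    simp only [resolventForm_conj hU hV, two_mul_re_sub_mul_normSq (hpos _ _).ne']
  constructor
  · refine ⟨U * of (fun i j => (star U * V) i j * ((q j / (p i + t * q j) : ℝ) : ℂ)) * star V, ?_⟩
    rw [hform]
    simp
  · rintro _ ⟨Y, rfl⟩
    have hY : Y = U * (star U * Y * V) * star V := by
      simp only [Matrix.mul_assoc, Unitary.mul_star_self_of_mem hV, Matrix.mul_one]
      rw [← Matrix.mul_assoc, Unitary.mul_star_self_of_mem hU, Matrix.one_mul]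
    rw [hY, hform]
    gcongr with i _ j _
    exact sub_le_self _ (mul_nonneg (hpos i j).le (Complex.normSq_nonneg _))

theorem isGreatest_resolventForm {ρ σ : Matrix n n ℂ} (hρ : ρ.PosSemidef) (hσ : σ.PosDef)
    {t : ℝ} (ht : 0 < t) :
    IsGreatest (Set.range (resolventForm ρ σ t))
      (resolventSum (overlap hρ.1 hσ.1) (fun ij => hρ.1.eigenvalues ij.1)
        (fun ij => hσ.1.eigenvalues ij.2) t) := by
  have h := isGreatest_resolventForm_conj hρ.1.eigenvectorUnitary.2 hσ.1.eigenvectorUnitary.2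
    hρ.eigenvalues_nonneg hσ.eigenvalues_pos ht
  rw [← Unitary.conjStarAlgAut_apply (S := ℂ), ← Unitary.conjStarAlgAut_apply (S := ℂ),
    ← hρ.1.spectral_theorem, ← hσ.1.spectral_theorem] at h
  rw [resolventSum, Fintype.sum_prod_type]
  exact h

end ResolventForm

section Monotonicity

variable {a b : Type*} [Fintype a] [Fintype b] [DecidableEq b]

theorem resolventForm_kronecker_one (ρ σ : Matrix (a × b) (a × b) ℂ) (t : ℝ) (Y : Matrix a a ℂ) :
    resolventForm ρ σ t (Y ⊗ₖ (1 : Matrix b b ℂ))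
      = resolventForm (ptraceB ρ) (ptraceB σ) t Y := by
  have hstar : star (Y ⊗ₖ (1 : Matrix b b ℂ)) = star Y ⊗ₖ 1 := by
    rw [star_eq_conjTranspose, conjTranspose_kronecker, conjTranspose_one, star_eq_conjTranspose]
  have hρ : (star (Y ⊗ₖ (1 : Matrix b b ℂ)) * ρ * (Y ⊗ₖ 1)).trace
      = (star Y * ptraceB ρ * Y).trace := by
    rw [trace_mul_comm, ← Matrix.mul_assoc, hstar, ← mul_kronecker_mul, Matrix.one_mul,
      trace_kronecker_one_mul, Matrix.mul_assoc, trace_mul_comm, Matrix.mul_assoc]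
  rw [resolventForm, hρ]
  simp only [hstar, ← mul_kronecker_mul, Matrix.one_mul, trace_kronecker_one_mul, resolventForm]

variable [DecidableEq a]

theorem resolventSum_ptraceB_le [Nonempty b] {ρ σ : Matrix (a × b) (a × b) ℂ}
    (hρ : ρ.PosSemidef) (hσ : σ.PosDef) {t : ℝ} (ht : 0 < t) :
    resolventSum (overlap hρ.ptraceB.1 hσ.ptraceB.1) (fun ij => hρ.ptraceB.1.eigenvalues ij.1)
        (fun ij => hσ.ptraceB.1.eigenvalues ij.2) t
      ≤ resolventSum (overlap hρ.1 hσ.1) (fun ij => hρ.1.eigenvalues ij.1)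
        (fun ij => hσ.1.eigenvalues ij.2) t := by
  obtain ⟨Y, hY⟩ := (isGreatest_resolventForm hρ.ptraceB hσ.ptraceB ht).1
  rw [← hY, ← resolventForm_kronecker_one]
  exact (isGreatest_resolventForm hρ hσ ht).2 ⟨_, rfl⟩

theorem relEntropy_ptraceB_le {ρ σ : Matrix (a × b) (a × b) ℂ} (hρ : ρ.PosSemidef)
    (hσ : σ.PosDef) : relEntropy (ptraceB ρ) (ptraceB σ) ≤ relEntropy ρ σ := by
  cases isEmpty_or_nonempty b
  · simp [relEntropy, ptraceB_of_isEmpty, trace_eq_zero_of_isEmpty]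
  rw [relEntropy_eq_weightedRelEntropy hρ.1 hσ.1,
    relEntropy_eq_weightedRelEntropy hρ.ptraceB.1 hσ.ptraceB.1]
  refine weightedRelEntropy_le_of_resolventSum_le (fun ij => hρ.eigenvalues_nonneg ij.1)
    (fun ij => hσ.eigenvalues_pos ij.2) (fun ij => hρ.ptraceB.eigenvalues_nonneg ij.1)
    (fun ij => hσ.ptraceB.eigenvalues_pos ij.2) ?_ ?_ fun t ht => resolventSum_ptraceB_le hρ hσ ht
  · rw [sum_overlap_mul_eigenvalues_fst, sum_overlap_mul_eigenvalues_fst, trace_ptraceB]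
  · rw [sum_overlap_mul_eigenvalues_snd, sum_overlap_mul_eigenvalues_snd, trace_ptraceB]

end Monotonicity

theorem relative_entropy_monotone_under_partial_trace_general
    {a b : Type*} [Fintype a] [DecidableEq a] [Fintype b] [DecidableEq b]
    (ρ ρ' : Matrix (a × b) (a × b) ℂ)
    (hρ : ρ.PosSemidef)
    (hρ' : ρ'.PosDef) :
    (((ptraceB ρ) * (mlog (ptraceB ρ) - mlog (ptraceB ρ'))).trace).re ≤
      ((ρ * (mlog ρ - mlog ρ')).trace).re ∧
    vnEntropy ρ + ((ρ * mlog ρ').trace).re ≤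
      vnEntropy (ptraceB ρ) + (((ptraceB ρ) * mlog (ptraceB ρ')).trace).re := by
  have h := relEntropy_ptraceB_le hρ hρ'
  refine ⟨h, ?_⟩
  simp only [relEntropy, Matrix.mul_sub, trace_sub, Complex.sub_re] at h
  simp only [vnEntropy]
  linarith

/-- Monotonicity of relative entropy under partial trace (data processing):
`S(ρ_A ‖ ρ'_A) ≤ S(ρ ‖ ρ')`, and consequently
`S(ρ_A) + Tr(ρ_A log ρ'_A) ≥ S(ρ) + Tr(ρ log ρ')`. -/
theorem relative_entropy_monotone_under_partial_trace
    {a b : Type*} [Fintype a] [DecidableEq a] [Fintype b] [DecidableEq b]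
    (ρ ρ' : Matrix (a × b) (a × b) ℂ)
    (hρ : ρ.PosSemidef) (hρ1 : ρ.trace = 1)
    (hρ' : ρ'.PosDef) (hρ'1 : ρ'.trace = 1) :
    (((ptraceB ρ) * (mlog (ptraceB ρ) - mlog (ptraceB ρ'))).trace).re ≤
      ((ρ * (mlog ρ - mlog ρ')).trace).re ∧
    vnEntropy ρ + ((ρ * mlog ρ').trace).re ≤
      vnEntropy (ptraceB ρ) + (((ptraceB ρ) * mlog (ptraceB ρ')).trace).re :=
  relative_entropy_monotone_under_partial_trace_general ρ ρ' hρ hρ'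
end
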